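/- arXiv:2009.03975 — 5 statements merged into one kernel-verified Lean document; each statement's English description precedes it below -/
import Mathlib

section
/- For p ∈ (1,∞) the optimal density is unique: if ρ₁ and ρ₂ are both admissible densities with E_{p,σ}(ρ₁) = E_{p,σ}(ρ₂) = Mod_{p,σ}(Γ), then ρ₁ = ρ₂. -/
open Finset

noncomputable section

/-- A density `ρ` is admissible for the usage matrix `N` if it is nonnegative and
every object has `ρ`-length at least 1. -/
def IsAdmissible {E Γ : Type*} [Fintype E] (N : Γ → E → ℝ) (ρ : E → ℝ) : Prop :=
  (∀ e, 0 ≤ ρ e) ∧ ∀ γ : Γ, 1 ≤ ∑ e, N γ e * ρ e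

/-- The `p`-energy of a density. -/
def pEnergy {E : Type*} [Fintype E] (σ : E → ℝ) (p : ℝ) (ρ : E → ℝ) : ℝ :=
  ∑ e, σ e * ρ e ^ p

/-- The `p`-modulus: the infimum of the `p`-energy over admissible densities. -/
def pModulus {E Γ : Type*} [Fintype E] (N : Γ → E → ℝ) (σ : E → ℝ) (p : ℝ) : ℝ :=
  sInf {x | ∃ ρ : E → ℝ, IsAdmissible N ρ ∧ x = pEnergy σ p ρ}

section

variable {E Γ : Type*} [Fintype E]

theorem convex_setOf_isAdmissible (N : Γ → E → ℝ) :
    Convex ℝ {ρ : E → ℝ | IsAdmissible N ρ} := by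
  rintro ρ₁ ⟨hρ₁, hlen₁⟩ ρ₂ ⟨hρ₂, hlen₂⟩ a b ha hb hab
  refine ⟨fun e => add_nonneg (mul_nonneg ha (hρ₁ e)) (mul_nonneg hb (hρ₂ e)),
    fun γ => ?_⟩
  have hlen : ∑ e, N γ e * (a • ρ₁ + b • ρ₂) e
      = a * ∑ e, N γ e * ρ₁ e + b * ∑ e, N γ e * ρ₂ e := by
    simp only [Pi.add_apply, Pi.smul_apply, smul_eq_mul, mul_sum, ← sum_add_distrib]
    exact sum_congr rfl fun e _ => by ring
  calc 1 = a * 1 + b * 1 := by rw [mul_one, mul_one, hab]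
    _ ≤ a * ∑ e, N γ e * ρ₁ e + b * ∑ e, N γ e * ρ₂ e := by
        gcongr
        exacts [hlen₁ γ, hlen₂ γ]
    _ = ∑ e, N γ e * (a • ρ₁ + b • ρ₂) e := hlen.symm

theorem strictConvexOn_pEnergy {σ : E → ℝ} (hσ : ∀ e, 0 < σ e) {p : ℝ} (hp : 1 < p) :
    StrictConvexOn ℝ (Set.Ici 0) (pEnergy σ p) := by
  refine ⟨convex_Ici 0, fun ρ₁ hρ₁ ρ₂ hρ₂ hne a b ha hb hab => ?_⟩
  obtain ⟨e₀, he₀⟩ := Function.ne_iff.mp hne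
  have hrpow := strictConvexOn_rpow hp
  simp only [pEnergy, Pi.add_apply, Pi.smul_apply, smul_eq_mul, mul_sum, ← sum_add_distrib]
  refine sum_lt_sum (fun e _ => ?_) ⟨e₀, mem_univ e₀, ?_⟩
  · calc σ e * (a * ρ₁ e + b * ρ₂ e) ^ p
        ≤ σ e * (a * ρ₁ e ^ p + b * ρ₂ e ^ p) := by
          gcongr
          · exact (hσ e).le
          · exact hrpow.convexOn.2 (hρ₁ e) (hρ₂ e) ha.le hb.le hab
      _ = a * (σ e * ρ₁ e ^ p) + b * (σ e * ρ₂ e ^ p) := by ring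
  · calc σ e₀ * (a * ρ₁ e₀ + b * ρ₂ e₀) ^ p
        < σ e₀ * (a * ρ₁ e₀ ^ p + b * ρ₂ e₀ ^ p) :=
          mul_lt_mul_of_pos_left (hrpow.2 (hρ₁ e₀) (hρ₂ e₀) he₀ ha hb hab) (hσ e₀)
      _ = a * (σ e₀ * ρ₁ e₀ ^ p) + b * (σ e₀ * ρ₂ e₀ ^ p) := by ring

theorem pModulus_le_pEnergy (N : Γ → E → ℝ) {σ : E → ℝ} (hσ : ∀ e, 0 ≤ σ e) (p : ℝ)
    {ρ : E → ℝ} (hρ : IsAdmissible N ρ) : pModulus N σ p ≤ pEnergy σ p ρ := by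
  refine csInf_le ⟨0, ?_⟩ ⟨ρ, hρ, rfl⟩
  rintro x ⟨ρ', hρ', rfl⟩
  exact sum_nonneg fun e _ =>
    mul_nonneg (hσ e) (Real.rpow_nonneg (hρ'.1 e) p)

end

theorem optimal_density_unique_general {E Γ : Type*} [Fintype E]
    (N : Γ → E → ℝ)
    (σ : E → ℝ) (hσ : ∀ e, 0 < σ e)
    (p : ℝ) (hp : 1 < p)
    (ρ₁ ρ₂ : E → ℝ) (h₁ : IsAdmissible N ρ₁) (h₂ : IsAdmissible N ρ₂)
    (hE₁ : pEnergy σ p ρ₁ = pModulus N σ p) (hE₂ : pEnergy σ p ρ₂ = pModulus N σ p) :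
    ρ₁ = ρ₂ := by
  have hconv : StrictConvexOn ℝ {ρ | IsAdmissible N ρ} (pEnergy σ p) :=
    (strictConvexOn_pEnergy hσ hp).subset (fun _ hρ => hρ.1) (convex_setOf_isAdmissible N)
  have hmin : ∀ ρ, pEnergy σ p ρ = pModulus N σ p →
      IsMinOn (pEnergy σ p) {ρ | IsAdmissible N ρ} ρ :=
    fun _ hρ _ hρ' => hρ ▸ pModulus_le_pEnergy N (fun e => (hσ e).le) p hρ'
  exact hconv.eq_of_isMinOn (hmin ρ₁ hE₁) (hmin ρ₂ hE₂) h₁ h₂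

/-- for `p ∈ (1,∞)` the optimal density is unique. -/
theorem optimal_density_unique {E Γ : Type*} [Fintype E] [Fintype Γ] [Nonempty E] [Nonempty Γ]
    (N : Γ → E → ℝ) (hN : ∀ γ e, 0 ≤ N γ e) (hrow : ∀ γ, ∃ e, 0 < N γ e)
    (σ : E → ℝ) (hσ : ∀ e, 0 < σ e)
    (p : ℝ) (hp : 1 < p)
    (ρ₁ ρ₂ : E → ℝ) (h₁ : IsAdmissible N ρ₁) (h₂ : IsAdmissible N ρ₂)
    (hE₁ : pEnergy σ p ρ₁ = pModulus N σ p) (hE₂ : pEnergy σ p ρ₂ = pModulus N σ p) :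
    ρ₁ = ρ₂ :=
  optimal_density_unique_general N σ hσ p hp ρ₁ ρ₂ h₁ h₂ hE₁ hE₂
end
end

section
/- For p ∈ (1,∞), with q = p/(p−1) and conjugate weights σ̂(e) = σ(e)^{−q/p}, the p-modulus satisfies the lower bound Mod_{p,σ}(Γ)^{−1} ≤ σ̂(E)^{p/q} · (max_{e∈E} Σ_{γ∈Γ} N(γ,e))^p / |Γ|^p, where σ̂(E) = Σ_{e∈E} σ̂(e); equivalently, Mod_{p,σ}(Γ) ≥ |Γ|^p · σ̂(E)^{−p/q} · (max_{e∈E} Σ_{γ∈Γ} N(γ,e))^{−p}. In particular, families whose edges are used by few objects (small column sums of N) have large modulus. -/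
open Finset

noncomputable section

/-!
Summing the admissibility constraints over all objects and exchanging the sums gives
`|Γ| ≤ M · Σ_e ρ(e)`, where `M` bounds the column sums of `N`. Hölder's inequality with the
weights `σ^(1/p)` and `σ^(-1/p)` bounds `Σ_e ρ(e)` by `E_{p,σ}(ρ)^(1/p) · σ̂(E)^(1/q)`.
Raising to the power `p` bounds the energy of every admissible density from below, hence
the modulus.
-/

section

variable {E Γ : Type*} [Fintype E] [Fintype Γ]

theorem IsAdmissible.card_le_mul_sum {N : Γ → E → ℝ} {ρ : E → ℝ} (hρ : IsAdmissible N ρ)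
    {M : ℝ} (hM : ∀ e, ∑ γ, N γ e ≤ M) : (Fintype.card Γ : ℝ) ≤ M * ∑ e, ρ e :=
  calc (Fintype.card Γ : ℝ) = ∑ _γ : Γ, (1 : ℝ) := by simp
    _ ≤ ∑ γ, ∑ e, N γ e * ρ e := sum_le_sum fun γ _ => hρ.2 γ
    _ = ∑ e, (∑ γ, N γ e) * ρ e := by rw [sum_comm]; simp only [sum_mul]
    _ ≤ ∑ e, M * ρ e := sum_le_sum fun e _ => mul_le_mul_of_nonneg_right (hM e) (hρ.1 e)
    _ = M * ∑ e, ρ e := (mul_sum ..).symm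

theorem sum_le_pEnergy_rpow_mul {σ ρ : E → ℝ} (hσ : ∀ e, 0 < σ e) (hρ : ∀ e, 0 ≤ ρ e)
    {p q : ℝ} (hpq : p.HolderConjugate q) :
    ∑ e, ρ e ≤ pEnergy σ p ρ ^ (1 / p) * (∑ e, σ e ^ (-(q / p))) ^ (1 / q) := by
  have hsplit : ∀ e, σ e ^ (1 / p) * ρ e * σ e ^ (-(1 / p)) = ρ e := fun e => by
    rw [mul_right_comm, ← Real.rpow_add (hσ e), add_neg_cancel, Real.rpow_zero, one_mul]
  have hfirst : ∀ e, |σ e ^ (1 / p) * ρ e| ^ p = σ e * ρ e ^ p := fun e => by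
    rw [abs_of_nonneg (mul_nonneg (Real.rpow_nonneg (hσ e).le _) (hρ e)),
      Real.mul_rpow (Real.rpow_nonneg (hσ e).le _) (hρ e), ← Real.rpow_mul (hσ e).le,
      one_div_mul_cancel hpq.pos.ne', Real.rpow_one]
  have hsecond : ∀ e, |σ e ^ (-(1 / p))| ^ q = σ e ^ (-(q / p)) := fun e => by
    rw [abs_of_nonneg (Real.rpow_nonneg (hσ e).le _), ← Real.rpow_mul (hσ e).le]
    ring_nf
  calc ∑ e, ρ e = ∑ e, σ e ^ (1 / p) * ρ e * σ e ^ (-(1 / p)) :=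
        sum_congr rfl fun e _ => (hsplit e).symm
    _ ≤ (∑ e, |σ e ^ (1 / p) * ρ e| ^ p) ^ (1 / p) * (∑ e, |σ e ^ (-(1 / p))| ^ q) ^ (1 / q) :=
        Real.inner_le_Lp_mul_Lq _ _ _ hpq
    _ = pEnergy σ p ρ ^ (1 / p) * (∑ e, σ e ^ (-(q / p))) ^ (1 / q) := by
        simp only [hfirst, hsecond, pEnergy]

theorem IsAdmissible.card_rpow_le {N : Γ → E → ℝ} {ρ : E → ℝ} (hρ : IsAdmissible N ρ)
    {σ : E → ℝ} (hσ : ∀ e, 0 < σ e) {p q : ℝ} (hpq : p.HolderConjugate q)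
    {M : ℝ} (hM₀ : 0 ≤ M) (hM : ∀ e, ∑ γ, N γ e ≤ M) :
    (Fintype.card Γ : ℝ) ^ p ≤
      (∑ e, σ e ^ (-(q / p))) ^ (p / q) * M ^ p * pEnergy σ p ρ := by
  set A := ∑ e, σ e ^ (-(q / p))
  have hA : 0 ≤ A := sum_nonneg fun e _ => Real.rpow_nonneg (hσ e).le _
  have hEn : 0 ≤ pEnergy σ p ρ :=
    sum_nonneg fun e _ => mul_nonneg (hσ e).le (Real.rpow_nonneg (hρ.1 e) _)
  have hcard : (Fintype.card Γ : ℝ) ≤ M * (pEnergy σ p ρ ^ (1 / p) * A ^ (1 / q)) :=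
    (hρ.card_le_mul_sum hM).trans
      (mul_le_mul_of_nonneg_left (sum_le_pEnergy_rpow_mul hσ hρ.1 hpq) hM₀)
  calc (Fintype.card Γ : ℝ) ^ p
      ≤ (M * (pEnergy σ p ρ ^ (1 / p) * A ^ (1 / q))) ^ p :=
        Real.rpow_le_rpow (Nat.cast_nonneg _) hcard hpq.nonneg
    _ = A ^ (p / q) * M ^ p * pEnergy σ p ρ := by
        rw [Real.mul_rpow hM₀ (by positivity), Real.mul_rpow (by positivity) (by positivity),
          ← Real.rpow_mul hEn, ← Real.rpow_mul hA, one_div_mul_cancel hpq.pos.ne',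
          Real.rpow_one, one_div_mul_eq_div]
        ring

theorem exists_isAdmissible {N : Γ → E → ℝ} (hN : ∀ γ e, 0 ≤ N γ e)
    (hrow : ∀ γ, ∃ e, 0 < N γ e) : ∃ ρ, IsAdmissible N ρ := by
  have hlen : ∀ γ, 0 < ∑ e, N γ e := fun γ =>
    let ⟨e, he⟩ := hrow γ
    sum_pos' (fun e _ => hN γ e) ⟨e, mem_univ e, he⟩
  refine ⟨fun _ => ∑ γ, (∑ e, N γ e)⁻¹,
    fun _ => sum_nonneg fun γ _ => (inv_pos.2 (hlen γ)).le, fun γ => ?_⟩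
  rw [← sum_mul, ← div_le_iff₀' (hlen γ), one_div]
  exact single_le_sum (f := fun γ => (∑ e, N γ e)⁻¹)
    (fun γ _ => (inv_pos.2 (hlen γ)).le) (mem_univ γ)

omit [Fintype Γ] in
theorem le_pModulus {N : Γ → E → ℝ} {σ : E → ℝ} {p c : ℝ} (hadm : ∃ ρ, IsAdmissible N ρ)
    (hc : ∀ ρ, IsAdmissible N ρ → c ≤ pEnergy σ p ρ) : c ≤ pModulus N σ p := by
  obtain ⟨ρ, hρ⟩ := hadm
  exact le_csInf ⟨_, ρ, hρ, rfl⟩ fun _ ⟨ρ, hρ, hx⟩ => hx ▸ hc ρ hρ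

end

/-- with `q = p/(p-1)` and `σ̂(e) = σ(e)^(-q/p)`,
`Mod_{p,σ}(Γ)⁻¹ ≤ σ̂(E)^(p/q) · (max_e Σ_γ N(γ,e))^p / |Γ|^p`. -/
theorem modulus_lower_bound {E Γ : Type*} [Fintype E] [Fintype Γ] [Nonempty E] [Nonempty Γ]
    (N : Γ → E → ℝ) (hN : ∀ γ e, 0 ≤ N γ e) (hrow : ∀ γ, ∃ e, 0 < N γ e)
    (σ : E → ℝ) (hσ : ∀ e, 0 < σ e)
    (p q : ℝ) (hp : 1 < p) (hq : q = p / (p - 1)) :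
    (pModulus N σ p)⁻¹ ≤
      (∑ e, σ e ^ (-(q / p))) ^ (p / q) *
        (Finset.univ.sup' Finset.univ_nonempty (fun e => ∑ γ, N γ e)) ^ p /
        (Fintype.card Γ : ℝ) ^ p := by
  have hpq : p.HolderConjugate q := (Real.holderConjugate_iff_eq_conjExponent hp).2 hq
  set M := Finset.univ.sup' Finset.univ_nonempty (fun e => ∑ γ, N γ e)
  have hM : ∀ e, ∑ γ, N γ e ≤ M := fun e => le_sup' (fun e => ∑ γ, N γ e) (mem_univ e)
  obtain ⟨ρ, hρ⟩ := exists_isAdmissible hN hrow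
  have hM₀ : 0 < M := by
    have hcard : (0 : ℝ) < Fintype.card Γ := Nat.cast_pos.2 Fintype.card_pos
    exact pos_of_mul_pos_left (hcard.trans_le (hρ.card_le_mul_sum hM))
      (sum_nonneg fun e _ => hρ.1 e)
  have hK : 0 < (∑ e, σ e ^ (-(q / p))) ^ (p / q) * M ^ p := by
    have : 0 < ∑ e, σ e ^ (-(q / p)) :=
      sum_pos (fun e _ => Real.rpow_pos_of_pos (hσ e) _) univ_nonempty
    positivity
  have hmod : (Fintype.card Γ : ℝ) ^ p / ((∑ e, σ e ^ (-(q / p))) ^ (p / q) * M ^ p) ≤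
      pModulus N σ p :=
    le_pModulus ⟨ρ, hρ⟩ fun ρ hρ => (div_le_iff₀' hK).2 (hρ.card_rpow_le hσ hpq hM₀.le hM)
  calc (pModulus N σ p)⁻¹ ≤ _ := inv_anti₀ (by positivity) hmod
    _ = _ := inv_div _ _
end
end

section
/- (Probabilistic interpretation / Lagrangian duality of p-modulus.) For p ∈ (1,∞), with q = p/(p−1) and σ̂(e) = σ(e)^{−q/p}, one has Mod_{p,σ}(Γ) = ( min over pmfs μ on Γ of E_{q,σ̂}(η_μ) )^{−p/q}, where η_μ(e) = Σ_{γ∈Γ} N(γ,e)μ(γ) and E_{q,σ̂}(η_μ) = Σ_{e∈E} σ̂(e)η_μ(e)^q. -/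
open Finset

noncomputable section

/-- A probability mass function on `Γ`. -/
def IsPmf {Γ : Type*} [Fintype Γ] (μ : Γ → ℝ) : Prop :=
  (∀ γ, 0 ≤ μ γ) ∧ ∑ γ, μ γ = 1

/-- The expected edge usage `η_μ(e)` of a pmf `μ`. -/
def edgeUsage {E Γ : Type*} [Fintype Γ] (N : Γ → E → ℝ) (μ : Γ → ℝ) (e : E) : ℝ :=
  ∑ γ, N γ e * μ γ

/-! The minimum `M` of the dual energy `μ ↦ Σ σ̂ η_μ^q` over the simplex exists by compactness, and
`M > 0` because every row of `N` is nonzero. Weak duality is Hölder's inequality: for admissible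
`ρ` and any pmf `μ`, `1 ≤ Σ η_μ ρ ≤ (Σ σ̂ η_μ^q)^(1/q) (Σ σ ρ^p)^(1/p)`. For strong duality, the
first-order optimality conditions at a minimizer `μ*` (obtained by moving towards a point mass and
using the convexity of `x ↦ x^q`) say `M ≤ Σ_e σ̂ η^(q-1) N(γ,e)` for every `γ`, so
`ρ* = σ̂ η^(q-1) / M` is admissible; it has energy exactly `M^(-p/q)`. -/

lemma rpow_add_mul_rpow_sub_one_mul_sub_le {q a b : ℝ} (hq : 1 < q) (ha : 0 ≤ a) (hb : 0 ≤ b) :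
    b ^ q + q * b ^ (q - 1) * (a - b) ≤ a ^ q := by
  rcases hb.eq_or_lt with rfl | hb
  · simp [Real.zero_rpow (by linarith : q ≠ 0), Real.zero_rpow (by linarith : q - 1 ≠ 0),
      Real.rpow_nonneg ha]
  · have hbern : 1 + q * (a / b - 1) ≤ (a / b) ^ q := by
      simpa using one_add_mul_self_le_rpow_one_add
        (by linarith [div_nonneg ha hb.le] : -1 ≤ a / b - 1) hq.le
    have hbq : b ^ q = b ^ (q - 1) * b := by
      rw [← Real.rpow_add_one hb.ne', sub_add_cancel]
    calc b ^ q + q * b ^ (q - 1) * (a - b) = b ^ q * (1 + q * (a / b - 1)) := by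
          rw [hbq]; field_simp
      _ ≤ b ^ q * (a / b) ^ q := by gcongr
      _ = a ^ q := by rw [Real.div_rpow ha hb.le]; field_simp

section Energy

variable {E : Type*} [Fintype E]

lemma pEnergy_nonneg {σ : E → ℝ} (hσ : ∀ e, 0 ≤ σ e) (p : ℝ) {ρ : E → ℝ} (hρ : ∀ e, 0 ≤ ρ e) :
    0 ≤ pEnergy σ p ρ :=
  sum_nonneg fun e _ => mul_nonneg (hσ e) (Real.rpow_nonneg (hρ e) p)

lemma pEnergy_le_add_mul_sum {τ : E → ℝ} (hτ : ∀ e, 0 ≤ τ e) {q : ℝ} (hq : 1 < q)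
    {a b : E → ℝ} (ha : ∀ e, 0 ≤ a e) (hb : ∀ e, 0 ≤ b e) :
    pEnergy τ q b ≤ pEnergy τ q a + q * ∑ e, τ e * b e ^ (q - 1) * (b e - a e) := by
  rw [pEnergy, pEnergy, mul_sum, ← sum_add_distrib]
  refine sum_le_sum fun e _ => ?_
  have := mul_le_mul_of_nonneg_left
    (rpow_add_mul_rpow_sub_one_mul_sub_le hq (ha e) (hb e)) (hτ e)
  linarith

lemma pEnergy_le_sum_mul_of_isMinOn_segment {τ : E → ℝ} (hτ : ∀ e, 0 ≤ τ e) {q : ℝ}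
    (hq : 1 < q) {η ν : E → ℝ} (hη : ∀ e, 0 ≤ η e) (hν : ∀ e, 0 ≤ ν e)
    (hmin : IsMinOn (pEnergy τ q) (segment ℝ η ν) η) :
    pEnergy τ q η ≤ ∑ e, τ e * η e ^ (q - 1) * ν e := by
  set g : ℝ → ℝ := fun t => ∑ e, τ e * ((1 - t) * η e + t * ν e) ^ (q - 1) * (ν e - η e)
  -- Minimality against the tangent-line bound at `(1 - t) • η + t • ν` gives `0 ≤ q * t * g t`.
  have hg_pos : ∀ t ∈ Set.Ioc (0 : ℝ) 1, 0 ≤ g t := by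
    rintro t ⟨ht0, ht1⟩
    have hmem : (1 - t) • η + t • ν ∈ segment ℝ η ν :=
      ⟨1 - t, t, by linarith, ht0.le, by ring, rfl⟩
    have hle := pEnergy_le_add_mul_sum hτ hq hη (b := (1 - t) • η + t • ν)
      fun e => by simp only [Pi.add_apply, Pi.smul_apply, smul_eq_mul]; nlinarith [hη e, hν e]
    have hsum : ∑ e, τ e * ((1 - t) • η + t • ν) e ^ (q - 1) * (((1 - t) • η + t • ν) e - η e)
        = t * g t := by
      rw [mul_sum]
      refine sum_congr rfl fun e _ => ?_
      simp only [Pi.add_apply, Pi.smul_apply, smul_eq_mul]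
      ring
    rw [hsum] at hle
    have hmin_t : pEnergy τ q η ≤ pEnergy τ q ((1 - t) • η + t • ν) := hmin hmem
    have hqt : 0 < q * t := by positivity
    exact (mul_nonneg_iff_of_pos_left hqt).1 (by linarith)
  have hg_cont : Continuous g := by
    refine continuous_finsetSum _ fun e _ => ?_
    exact (continuous_const.mul ((by fun_prop : Continuous fun t : ℝ => (1 - t) * η e + t * ν e)
      |>.rpow_const fun _ => Or.inr (by linarith))).mul continuous_const
  have hg0 : 0 ≤ g 0 :=
    ge_of_tendsto ((hg_cont.tendsto 0).mono_left nhdsWithin_le_nhds)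
      (Filter.eventually_of_mem (Ioc_mem_nhdsGT zero_lt_one) hg_pos)
  have hg0_eq : g 0 = ∑ e, τ e * η e ^ (q - 1) * ν e - pEnergy τ q η := by
    simp only [g, pEnergy, ← sum_sub_distrib, sub_zero, one_mul, zero_mul, add_zero]
    refine sum_congr rfl fun e _ => ?_
    have hpow : η e ^ q = η e ^ (q - 1) * η e := by
      rw [← Real.rpow_add_one' (hη e) (by linarith), sub_add_cancel]
    rw [hpow]
    ring
  linarith

lemma sum_mul_le_pEnergy_rpow_mul_pEnergy_rpow {σ : E → ℝ} (hσ : ∀ e, 0 < σ e) {p q : ℝ}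
    (hpq : p.HolderConjugate q) {η ρ : E → ℝ} (hη : ∀ e, 0 ≤ η e) (hρ : ∀ e, 0 ≤ ρ e) :
    ∑ e, η e * ρ e ≤
      pEnergy (fun e => σ e ^ (-(q / p))) q η ^ (1 / q) * pEnergy σ p ρ ^ (1 / p) := by
  -- Hölder for `u = σ^(-1/p) η` and `v = σ^(1/p) ρ`.
  have hholder := Real.inner_le_Lp_mul_Lq_of_nonneg univ hpq.symm
    (f := fun e => σ e ^ (-(1 / p)) * η e) (g := fun e => σ e ^ (1 / p) * ρ e)
    (fun e _ => mul_nonneg (Real.rpow_nonneg (hσ e).le _) (hη e))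
    (fun e _ => mul_nonneg (Real.rpow_nonneg (hσ e).le _) (hρ e))
  have hsum : ∑ e, η e * ρ e = ∑ e, σ e ^ (-(1 / p)) * η e * (σ e ^ (1 / p) * ρ e) :=
    sum_congr rfl fun e _ => by
      rw [mul_mul_mul_comm, ← Real.rpow_add (hσ e), neg_add_cancel, Real.rpow_zero, one_mul]
  have hη_energy : pEnergy (fun e => σ e ^ (-(q / p))) q η = ∑ e, (σ e ^ (-(1 / p)) * η e) ^ q :=
    sum_congr rfl fun e _ => by
      rw [Real.mul_rpow (Real.rpow_nonneg (hσ e).le _) (hη e), ← Real.rpow_mul (hσ e).le]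
      ring_nf
  have hρ_energy : pEnergy σ p ρ = ∑ e, (σ e ^ (1 / p) * ρ e) ^ p :=
    sum_congr rfl fun e _ => by
      rw [Real.mul_rpow (Real.rpow_nonneg (hσ e).le _) (hρ e), ← Real.rpow_mul (hσ e).le,
        one_div_mul_cancel hpq.ne_zero, Real.rpow_one]
  rw [hsum, hη_energy, hρ_energy]
  exact hholder

lemma pEnergy_rpow_neg_le_of_one_le_sum_mul {σ : E → ℝ} (hσ : ∀ e, 0 < σ e) {p q : ℝ}
    (hpq : p.HolderConjugate q) {η ρ : E → ℝ} (hη : ∀ e, 0 ≤ η e) (hρ : ∀ e, 0 ≤ ρ e)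
    (h : 1 ≤ ∑ e, η e * ρ e) :
    pEnergy (fun e => σ e ^ (-(q / p))) q η ^ (-(p / q)) ≤ pEnergy σ p ρ := by
  set M := pEnergy (fun e => σ e ^ (-(q / p))) q η
  have hM : 0 ≤ M := pEnergy_nonneg (fun e => (Real.rpow_pos_of_pos (hσ e) _).le) q hη
  have hEp : 0 ≤ pEnergy σ p ρ := pEnergy_nonneg (fun e => (hσ e).le) p hρ
  have hpq_ne : p / q ≠ 0 := div_ne_zero hpq.ne_zero hpq.symm.ne_zero
  rcases hM.eq_or_lt with hM0 | hM0
  · rw [← hM0, Real.zero_rpow (neg_ne_zero.2 hpq_ne)]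
    exact hEp
  have hholder : 1 ≤ (M ^ (1 / q) * pEnergy σ p ρ ^ (1 / p)) ^ p := by
    simpa using Real.one_le_rpow (h.trans (sum_mul_le_pEnergy_rpow_mul_pEnergy_rpow hσ hpq hη hρ))
      hpq.nonneg
  rw [Real.mul_rpow (by positivity) (by positivity), ← Real.rpow_mul hM, ← Real.rpow_mul hEp,
    one_div_mul_cancel hpq.ne_zero, Real.rpow_one, one_div_mul_eq_div] at hholder
  rw [Real.rpow_neg hM, inv_le_iff_one_le_mul₀' (by positivity)]
  exact hholder

-- The equality case of Hölder's inequality against `η`; when `η` is an optimal usage profile,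
-- the first-order conditions make it admissible.
def dualDensity (σ : E → ℝ) (p q : ℝ) (η : E → ℝ) (e : E) : ℝ :=
  σ e ^ (-(q / p)) * η e ^ (q - 1) / pEnergy (fun e => σ e ^ (-(q / p))) q η

lemma pEnergy_dualDensity {σ : E → ℝ} (hσ : ∀ e, 0 < σ e) {p q : ℝ} (hpq : p.HolderConjugate q)
    {η : E → ℝ} (hη : ∀ e, 0 ≤ η e) (hM : 0 < pEnergy (fun e => σ e ^ (-(q / p))) q η) :
    pEnergy σ p (dualDensity σ p q η) = pEnergy (fun e => σ e ^ (-(q / p))) q η ^ (-(p / q)) := by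
  set M := pEnergy (fun e => σ e ^ (-(q / p))) q η
  have hexp : 1 + -(q / p) * p = -(q / p) := by
    rw [hpq.symm.div_conj_eq_sub_one]
    linear_combination (-1 : ℝ) * hpq.mul_eq_add
  have hexp_ne : 1 + -(q / p) * p ≠ 0 := by
    rw [hexp]
    exact neg_ne_zero.2 (div_ne_zero hpq.symm.ne_zero hpq.ne_zero)
  have hterm : ∀ e, σ e * dualDensity σ p q η e ^ p = σ e ^ (-(q / p)) * η e ^ q / M ^ p := by
    intro e
    have hσe := hσ e
    rw [dualDensity, Real.div_rpow (mul_nonneg (Real.rpow_nonneg hσe.le _)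
        (Real.rpow_nonneg (hη e) _)) hM.le,
      Real.mul_rpow (Real.rpow_nonneg hσe.le _) (Real.rpow_nonneg (hη e) _),
      ← Real.rpow_mul hσe.le, ← Real.rpow_mul (hη e), hpq.symm.sub_one_mul_conj, ← mul_div_assoc,
      ← mul_assoc, ← Real.rpow_one_add' hσe.le hexp_ne, hexp]
  rw [pEnergy, sum_congr rfl fun e _ => hterm e, ← sum_div, hpq.div_conj_eq_sub_one, neg_sub,
    Real.rpow_sub hM, Real.rpow_one]
  rfl

lemma isAdmissible_dualDensity {Γ : Type*} (N : Γ → E → ℝ) {σ : E → ℝ} (hσ : ∀ e, 0 < σ e) {p q : ℝ}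
    {η : E → ℝ} (hη : ∀ e, 0 ≤ η e) (hM : 0 < pEnergy (fun e => σ e ^ (-(q / p))) q η)
    (h : ∀ γ, pEnergy (fun e => σ e ^ (-(q / p))) q η ≤
      ∑ e, σ e ^ (-(q / p)) * η e ^ (q - 1) * N γ e) :
    IsAdmissible N (dualDensity σ p q η) := by
  refine ⟨fun e => div_nonneg (mul_nonneg (Real.rpow_nonneg (hσ e).le _)
    (Real.rpow_nonneg (hη e) _)) hM.le, fun γ => ?_⟩
  have hsum : ∑ e, N γ e * dualDensity σ p q η e =
      (∑ e, σ e ^ (-(q / p)) * η e ^ (q - 1) * N γ e) /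
        pEnergy (fun e => σ e ^ (-(q / p))) q η := by
    rw [sum_div]
    exact sum_congr rfl fun e _ => by rw [dualDensity]; ring
  rw [hsum, one_le_div hM]
  exact h γ

end Energy

section EdgeUsage

variable {E Γ : Type*} [Fintype Γ] (N : Γ → E → ℝ)

lemma image_edgeUsage_segment (μ ν : Γ → ℝ) :
    edgeUsage N '' segment ℝ μ ν = segment ℝ (edgeUsage N μ) (edgeUsage N ν) :=
  image_segment ℝ (Matrix.of N).transpose.mulVecLin.toAffineMap μ ν

lemma edgeUsage_single [DecidableEq Γ] (γ : Γ) : edgeUsage N (Pi.single γ 1) = N γ := by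
  ext e
  simp [edgeUsage, Pi.single_apply]

lemma edgeUsage_nonneg (hN : ∀ γ e, 0 ≤ N γ e) {μ : Γ → ℝ} (hμ : IsPmf μ) (e : E) :
    0 ≤ edgeUsage N μ e :=
  sum_nonneg fun γ _ => mul_nonneg (hN γ e) (hμ.1 γ)

lemma edgeUsage_pos (hN : ∀ γ e, 0 ≤ N γ e) {μ : Γ → ℝ} (hμ : IsPmf μ) {γ : Γ} {e : E}
    (hμγ : 0 < μ γ) (hNγ : 0 < N γ e) : 0 < edgeUsage N μ e :=
  sum_pos' (fun γ _ => mul_nonneg (hN γ e) (hμ.1 γ)) ⟨γ, mem_univ γ, mul_pos hNγ hμγ⟩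

variable [Fintype E]

lemma sum_edgeUsage_mul (μ : Γ → ℝ) (ρ : E → ℝ) :
    ∑ e, edgeUsage N μ e * ρ e = ∑ γ, μ γ * ∑ e, N γ e * ρ e := by
  simp only [edgeUsage, sum_mul, mul_sum]
  rw [sum_comm]
  exact sum_congr rfl fun γ _ => sum_congr rfl fun e _ => by ring

lemma one_le_sum_edgeUsage_mul {μ : Γ → ℝ} (hμ : IsPmf μ) {ρ : E → ℝ} (hρ : IsAdmissible N ρ) :
    1 ≤ ∑ e, edgeUsage N μ e * ρ e := by
  rw [sum_edgeUsage_mul]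
  calc (1 : ℝ) = ∑ γ, μ γ * 1 := by simp [hμ.2]
    _ ≤ ∑ γ, μ γ * ∑ e, N γ e * ρ e := by gcongr with γ; exacts [hμ.1 γ, hρ.2 γ]

lemma pEnergy_edgeUsage_pos (hN : ∀ γ e, 0 ≤ N γ e) (hrow : ∀ γ, ∃ e, 0 < N γ e)
    {τ : E → ℝ} (hτ : ∀ e, 0 < τ e) (q : ℝ) {μ : Γ → ℝ} (hμ : IsPmf μ) :
    0 < pEnergy τ q (edgeUsage N μ) := by
  obtain ⟨γ, -, hμγ⟩ : ∃ γ ∈ univ, (0 : ℝ) < μ γ :=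
    exists_lt_of_sum_lt (by simp [hμ.2])
  obtain ⟨e, he⟩ := hrow γ
  exact sum_pos'
    (fun e' _ => mul_nonneg (hτ e').le (Real.rpow_nonneg (edgeUsage_nonneg N hN hμ e') q))
    ⟨e, mem_univ e, mul_pos (hτ e) (Real.rpow_pos_of_pos (edgeUsage_pos N hN hμ hμγ he) q)⟩

lemma continuous_pEnergy_edgeUsage (τ : E → ℝ) {q : ℝ} (hq : 0 ≤ q) :
    Continuous fun μ => pEnergy τ q (edgeUsage N μ) :=
  continuous_finsetSum _ fun _ _ => continuous_const.mul <|
    (continuous_finsetSum _ fun γ _ => continuous_const.mul (continuous_apply γ)).rpow_const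
      fun _ => Or.inr hq

lemma exists_isMinOn_pEnergy_edgeUsage [Nonempty Γ] (τ : E → ℝ) {q : ℝ} (hq : 0 ≤ q) :
    ∃ μ, IsPmf μ ∧ IsMinOn (fun μ => pEnergy τ q (edgeUsage N μ)) {μ | IsPmf μ} μ := by
  classical
  exact (isCompact_stdSimplex ℝ Γ).exists_isMinOn
    ⟨_, single_mem_stdSimplex ℝ (Classical.arbitrary Γ)⟩
    (continuous_pEnergy_edgeUsage N τ hq).continuousOn

lemma pEnergy_edgeUsage_le_of_isMinOn (hN : ∀ γ e, 0 ≤ N γ e) {τ : E → ℝ} (hτ : ∀ e, 0 ≤ τ e)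
    {q : ℝ} (hq : 1 < q) {μ : Γ → ℝ} (hμ : IsPmf μ)
    (hmin : IsMinOn (fun μ => pEnergy τ q (edgeUsage N μ)) {μ | IsPmf μ} μ) (γ : Γ) :
    pEnergy τ q (edgeUsage N μ) ≤ ∑ e, τ e * edgeUsage N μ e ^ (q - 1) * N γ e := by
  classical
  refine pEnergy_le_sum_mul_of_isMinOn_segment hτ hq (edgeUsage_nonneg N hN hμ)
    (hN γ) fun η hη => ?_
  rw [← edgeUsage_single N γ, ← image_edgeUsage_segment] at hη
  obtain ⟨ν, hν, rfl⟩ := hη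
  exact hmin ((convex_stdSimplex ℝ Γ).segment_subset hμ (single_mem_stdSimplex ℝ γ) hν)

end EdgeUsage

theorem modulus_prob_interp_general {E Γ : Type*} [Fintype E] [Fintype Γ] [Nonempty Γ]
    (N : Γ → E → ℝ) (hN : ∀ γ e, 0 ≤ N γ e) (hrow : ∀ γ, ∃ e, 0 < N γ e)
    (σ : E → ℝ) (hσ : ∀ e, 0 < σ e)
    (p q : ℝ) (hp : 1 < p) (hq : q = p / (p - 1)) :
    pModulus N σ p =
      (sInf {x | ∃ μ : Γ → ℝ, IsPmf μ ∧
          x = ∑ e, σ e ^ (-(q / p)) * edgeUsage N μ e ^ q}) ^ (-(p / q)) ∧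
    ∃ μ : Γ → ℝ, IsPmf μ ∧
      (∑ e, σ e ^ (-(q / p)) * edgeUsage N μ e ^ q) =
        sInf {x | ∃ μ' : Γ → ℝ, IsPmf μ' ∧
          x = ∑ e, σ e ^ (-(q / p)) * edgeUsage N μ' e ^ q} := by
  have hpq : p.HolderConjugate q := (Real.holderConjugate_iff_eq_conjExponent hp).2 hq
  have hτ : ∀ e, 0 < σ e ^ (-(q / p)) := fun e => Real.rpow_pos_of_pos (hσ e) _
  obtain ⟨μ, hμ, hmin⟩ := exists_isMinOn_pEnergy_edgeUsage N (fun e => σ e ^ (-(q / p)))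
    hpq.symm.nonneg
  set η := edgeUsage N μ
  have hη : ∀ e, 0 ≤ η e := edgeUsage_nonneg N hN hμ
  have hM : 0 < pEnergy (fun e => σ e ^ (-(q / p))) q η := pEnergy_edgeUsage_pos N hN hrow hτ q hμ
  have hdual : sInf {x | ∃ μ : Γ → ℝ, IsPmf μ ∧
      x = ∑ e, σ e ^ (-(q / p)) * edgeUsage N μ e ^ q} = pEnergy (fun e => σ e ^ (-(q / p))) q η :=
    IsLeast.csInf_eq ⟨⟨μ, hμ, rfl⟩, by rintro _ ⟨ν, hν, rfl⟩; exact hmin hν⟩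
  have hprimal : pModulus N σ p = pEnergy (fun e => σ e ^ (-(q / p))) q η ^ (-(p / q)) := by
    refine IsLeast.csInf_eq ⟨⟨dualDensity σ p q η, ?_, (pEnergy_dualDensity hσ hpq hη hM).symm⟩, ?_⟩
    · exact isAdmissible_dualDensity N hσ hη hM fun γ =>
        pEnergy_edgeUsage_le_of_isMinOn N hN (fun e => (hτ e).le) hpq.symm.lt hμ hmin γ
    · rintro _ ⟨ρ, hρ, rfl⟩
      exact pEnergy_rpow_neg_le_of_one_le_sum_mul hσ hpq hη hρ.1 (one_le_sum_edgeUsage_mul N hμ hρ)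
  exact ⟨by rw [hprimal, hdual], μ, hμ, hdual.symm⟩

/-- probabilistic interpretation: with `q = p/(p-1)` and `σ̂(e) = σ(e)^(-q/p)`,
`Mod_{p,σ}(Γ) = (min over pmfs μ of Σ_e σ̂(e) η_μ(e)^q)^(-p/q)`, and the minimum is attained. -/
theorem modulus_prob_interp {E Γ : Type*} [Fintype E] [Fintype Γ] [Nonempty E] [Nonempty Γ]
    (N : Γ → E → ℝ) (hN : ∀ γ e, 0 ≤ N γ e) (hrow : ∀ γ, ∃ e, 0 < N γ e)
    (σ : E → ℝ) (hσ : ∀ e, 0 < σ e)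
    (p q : ℝ) (hp : 1 < p) (hq : q = p / (p - 1)) :
    pModulus N σ p =
      (sInf {x | ∃ μ : Γ → ℝ, IsPmf μ ∧
          x = ∑ e, σ e ^ (-(q / p)) * edgeUsage N μ e ^ q}) ^ (-(p / q)) ∧
    ∃ μ : Γ → ℝ, IsPmf μ ∧
      (∑ e, σ e ^ (-(q / p)) * edgeUsage N μ e ^ q) =
        sInf {x | ∃ μ' : Γ → ℝ, IsPmf μ' ∧
          x = ∑ e, σ e ^ (-(q / p)) * edgeUsage N μ' e ^ q} :=
  modulus_prob_interp_general N hN hrow σ hσ p q hp hq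
end
end

section
/- (Probabilistic interpretation at p = ∞.) Mod_{∞,σ}(Γ)^{−1} = min over pmfs μ on Γ of Σ_{e∈E} σ(e)^{−1} η_μ(e), where Mod_{∞,σ}(Γ) is the infimum of max_{e∈E} σ(e)ρ(e) over admissible densities ρ and η_μ(e) = Σ_{γ∈Γ} N(γ,e)μ(γ). -/
/-! The objective `μ ↦ Σ_e σ(e)⁻¹ η_μ(e)` equals `Σ_γ μ(γ) ℓ(γ)`, where `ℓ(γ) = Σ_e N(γ,e) σ(e)⁻¹`
is the length of `γ` under the density `σ⁻¹`; being linear in `μ`, it is minimised by the point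
mass at a shortest object `γ₀`. On the other side, an admissible `ρ` of `∞`-energy `M` satisfies
`ρ ≤ M σ⁻¹`, so `1 ≤ M ℓ(γ₀)`, while `σ⁻¹ / ℓ(γ₀)` is admissible with energy `ℓ(γ₀)⁻¹`. Hence
`Mod_{∞,σ}(Γ) = ℓ(γ₀)⁻¹`. -/

open Finset

noncomputable section

/-- The `∞`-energy of a density. -/
def infEnergy {E : Type*} [Fintype E] [Nonempty E] (σ : E → ℝ) (ρ : E → ℝ) : ℝ :=
  Finset.univ.sup' Finset.univ_nonempty (fun e => σ e * ρ e)

/-- The `∞`-modulus: the infimum of the `∞`-energy over admissible densities. -/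
def infModulus {E Γ : Type*} [Fintype E] [Nonempty E] (N : Γ → E → ℝ) (σ : E → ℝ) : ℝ :=
  sInf {x | ∃ ρ : E → ℝ, IsAdmissible N ρ ∧ x = infEnergy σ ρ}

section Modulus

variable {E Γ : Type*} [Fintype E]

def densityLength (N : Γ → E → ℝ) (ρ : E → ℝ) (γ : Γ) : ℝ :=
  ∑ e, N γ e * ρ e

section densityLength

variable {N : Γ → E → ℝ}

lemma densityLength_mono (hN : ∀ γ e, 0 ≤ N γ e) {ρ ρ' : E → ℝ} (h : ∀ e, ρ e ≤ ρ' e) (γ : Γ) :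
    densityLength N ρ γ ≤ densityLength N ρ' γ :=
  sum_le_sum fun e _ => mul_le_mul_of_nonneg_left (h e) (hN γ e)

lemma densityLength_mul_const (N : Γ → E → ℝ) (ρ : E → ℝ) (c : ℝ) (γ : Γ) :
    densityLength N (fun e => ρ e * c) γ = densityLength N ρ γ * c := by
  simp only [densityLength, sum_mul, mul_assoc]

lemma densityLength_pos (hN : ∀ γ e, 0 ≤ N γ e) {ρ : E → ℝ} (hρ : ∀ e, 0 < ρ e) {γ : Γ}
    (hγ : ∃ e, 0 < N γ e) : 0 < densityLength N ρ γ := by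
  obtain ⟨e, he⟩ := hγ
  exact sum_pos' (fun e _ => mul_nonneg (hN γ e) (hρ e).le) ⟨e, mem_univ e, mul_pos he (hρ e)⟩

lemma sum_mul_edgeUsage [Fintype Γ] (N : Γ → E → ℝ) (w : E → ℝ) (μ : Γ → ℝ) :
    ∑ e, w e * edgeUsage N μ e = ∑ γ, μ γ * densityLength N w γ := by
  simp only [edgeUsage, densityLength, mul_sum]
  rw [sum_comm]
  exact sum_congr rfl fun γ _ => sum_congr rfl fun e _ => by ring

end densityLength

section Pmf

variable [Fintype Γ]

lemma IsPmf.le_sum_mul {μ : Γ → ℝ} (hμ : IsPmf μ) {f : Γ → ℝ} {c : ℝ} (h : ∀ γ, c ≤ f γ) :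
    c ≤ ∑ γ, μ γ * f γ :=
  calc c = ∑ γ, μ γ * c := by rw [← sum_mul, hμ.2, one_mul]
    _ ≤ ∑ γ, μ γ * f γ := sum_le_sum fun γ _ => mul_le_mul_of_nonneg_left (h γ) (hμ.1 γ)

variable [DecidableEq Γ]

lemma isPmf_single (γ : Γ) : IsPmf (Pi.single γ 1 : Γ → ℝ) :=
  ⟨fun γ' => by rw [Pi.single_apply]; split_ifs <;> norm_num, by simp⟩

lemma sum_single_mul (γ : Γ) (f : Γ → ℝ) : ∑ γ', (Pi.single γ 1 : Γ → ℝ) γ' * f γ' = f γ := by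
  simp [Pi.single_apply]

end Pmf

section InfModulus

variable {σ : E → ℝ} {N : Γ → E → ℝ}

lemma isAdmissible_inv_mul_inv (hσ : ∀ e, 0 < σ e) {c : ℝ} (hc : 0 < c)
    (hmin : ∀ γ, c ≤ densityLength N σ⁻¹ γ) : IsAdmissible N (fun e => (σ e)⁻¹ * c⁻¹) := by
  refine ⟨fun e => mul_nonneg (inv_pos.2 (hσ e)).le (inv_pos.2 hc).le, fun γ => ?_⟩
  change 1 ≤ densityLength N (fun e => σ⁻¹ e * c⁻¹) γ
  rw [densityLength_mul_const, ← div_eq_mul_inv, one_le_div hc]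
  exact hmin γ

variable [Nonempty E]

lemma le_infEnergy (σ ρ : E → ℝ) (e : E) : σ e * ρ e ≤ infEnergy σ ρ :=
  le_sup' (fun e => σ e * ρ e) (mem_univ e)

lemma infEnergy_inv_mul_const (hσ : ∀ e, 0 < σ e) (c : ℝ) :
    infEnergy σ (fun e => (σ e)⁻¹ * c) = c := by
  simp only [infEnergy, ← mul_assoc, mul_inv_cancel₀ (hσ _).ne', one_mul, sup'_const]

lemma one_le_densityLength_mul_infEnergy (hN : ∀ γ e, 0 ≤ N γ e) (hσ : ∀ e, 0 < σ e)
    {ρ : E → ℝ} (hρ : IsAdmissible N ρ) (γ : Γ) :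
    1 ≤ densityLength N σ⁻¹ γ * infEnergy σ ρ := by
  have hρ_le : ∀ e, ρ e ≤ σ⁻¹ e * infEnergy σ ρ := fun e => by
    rw [Pi.inv_apply, ← div_eq_inv_mul, le_div_iff₀' (hσ e)]
    exact le_infEnergy σ ρ e
  calc 1 ≤ densityLength N ρ γ := hρ.2 γ
    _ ≤ densityLength N σ⁻¹ γ * infEnergy σ ρ := by
      rw [← densityLength_mul_const]
      exact densityLength_mono hN hρ_le γ

theorem infModulus_eq_inv_min_densityLength (hN : ∀ γ e, 0 ≤ N γ e) (hσ : ∀ e, 0 < σ e) {γ₀ : Γ}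
    (hγ₀ : ∀ γ, densityLength N σ⁻¹ γ₀ ≤ densityLength N σ⁻¹ γ)
    (hpos : 0 < densityLength N σ⁻¹ γ₀) :
    infModulus N σ = (densityLength N σ⁻¹ γ₀)⁻¹ := by
  refine IsLeast.csInf_eq ⟨⟨_, isAdmissible_inv_mul_inv hσ hpos hγ₀, ?_⟩, ?_⟩
  · exact (infEnergy_inv_mul_const hσ _).symm
  · rintro _ ⟨ρ, hρ, rfl⟩
    exact (inv_le_iff_one_le_mul₀' hpos).2 (one_le_densityLength_mul_infEnergy hN hσ hρ γ₀)

end InfModulus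

end Modulus

/-- probabilistic interpretation at `p = ∞`:
`Mod_{∞,σ}(Γ)⁻¹ = min over pmfs μ of Σ_e σ(e)⁻¹ η_μ(e)`. -/
theorem modulus_prob_interp_infty
    {E Γ : Type*} [Fintype E] [Fintype Γ] [Nonempty E] [Nonempty Γ]
    (N : Γ → E → ℝ) (hN : ∀ γ e, 0 ≤ N γ e) (hrow : ∀ γ, ∃ e, 0 < N γ e)
    (σ : E → ℝ) (hσ : ∀ e, 0 < σ e) :
    ∃ μ : Γ → ℝ, IsPmf μ ∧
      (∀ μ' : Γ → ℝ, IsPmf μ' →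
        (∑ e, (σ e)⁻¹ * edgeUsage N μ e) ≤ ∑ e, (σ e)⁻¹ * edgeUsage N μ' e) ∧
      (infModulus N σ)⁻¹ = ∑ e, (σ e)⁻¹ * edgeUsage N μ e := by
  classical
  set ℓ := densityLength N σ⁻¹
  obtain ⟨γ₀, hγ₀⟩ := Finite.exists_min ℓ
  have hobjective (μ : Γ → ℝ) : ∑ e, (σ e)⁻¹ * edgeUsage N μ e = ∑ γ, μ γ * ℓ γ :=
    sum_mul_edgeUsage N σ⁻¹ μ
  refine ⟨Pi.single γ₀ 1, isPmf_single γ₀, fun μ hμ => ?_, ?_⟩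
  · rw [hobjective, hobjective, sum_single_mul]
    exact hμ.le_sum_mul hγ₀
  · have hpos : 0 < ℓ γ₀ := densityLength_pos hN (fun e => inv_pos.2 (hσ e)) (hrow γ₀)
    rw [hobjective, sum_single_mul, infModulus_eq_inv_min_densityLength hN hσ hγ₀ hpos, inv_inv]
end
end

section
/- (Modulus as dissipated power.) Let G be a finite connected simple graph, σ a positive weight on its edges, s ≠ t two vertices, Γ(s,t) the family of simple paths from s to t with usage matrix N(γ,e) = 1 if edge e lies on γ and 0 otherwise, and p ∈ (1,∞). Let ρ* be the unique admissible density attaining Mod_{p,σ}(Γ(s,t)), and let φ* : V → ℝ be the unique minimizer of the Dirichlet p-energy Σ_{{x,y}∈E(G)} σ({x,y})|φ(x)−φ(y)|^p subject to φ(s) = 0, φ(t) = 1. Then ρ*({x,y}) = |φ*(x)−φ*(y)| for every edge {x,y} of G, and consequently Mod_{p,σ}(Γ(s,t)) = Σ_{{x,y}∈E(G)} σ({x,y})|φ*(x)−φ*(y)|^p. -/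
open Finset

noncomputable section

/-- The absolute difference of a vertex potential across an (unordered) edge. -/
def eDiff {V : Type*} (φ : V → ℝ) : Sym2 V → ℝ :=
  Sym2.lift ⟨fun x y => |φ x - φ y|, fun x y => abs_sub_comm _ _⟩

/-!
Telescoping along a path shows that `|dφ|` is an admissible density for every potential with
`φ s = 0`, `φ t = 1`; conversely an admissible `ρ` dominates `|dφ|` on edges for the potential
`φ = min 1 (ρ-distance from s)`. So the Dirichlet minimum equals the modulus and `|dφ*|` is an
optimal density. Since the admissible densities form a convex set and `x ↦ x ^ p` is strictly convex
on `[0, ∞)` for `p > 1`, the optimal density is unique on edges.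
-/

theorem Finset.sum_insert_le_add {ι M : Type*} [DecidableEq ι] [AddCommMonoid M] [PartialOrder M]
    [IsOrderedAddMonoid M] {f : ι → M} {a : ι} (ha : 0 ≤ f a) (s : Finset ι) :
    ∑ i ∈ insert a s, f i ≤ ∑ i ∈ s, f i + f a := by
  by_cases h : a ∈ s
  · rw [insert_eq_of_mem h]
    exact le_add_of_nonneg_right ha
  · rw [sum_insert h, add_comm]

section Potential

variable {V : Type*} (φ : V → ℝ)

@[simp] lemma eDiff_mk (x y : V) : eDiff φ s(x, y) = |φ x - φ y| := rfl

lemma eDiff_nonneg (e : Sym2 V) : 0 ≤ eDiff φ e := by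
  induction e using Sym2.ind with
  | _ x y => exact abs_nonneg _

lemma SimpleGraph.Walk.abs_sub_le_sum_eDiff {G : SimpleGraph V} {a b : V} (w : G.Walk a b) :
    |φ b - φ a| ≤ (w.edges.map (eDiff φ)).sum := by
  induction w with
  | nil => simp
  | @cons u v c _ w ih =>
    simp only [SimpleGraph.Walk.edges_cons, List.map_cons, List.sum_cons, eDiff_mk]
    calc |φ c - φ u| ≤ |φ u - φ v| + |φ c - φ v| := by
          rw [abs_sub_comm (φ u), add_comm]; exact abs_sub_le _ _ _
      _ ≤ _ := by gcongr

end Potential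

namespace SimpleGraph

section Energy

variable {V : Type*} [Fintype V] (G : SimpleGraph V) [DecidableRel G.Adj]

def pEnergy (σ : Sym2 V → ℝ) (p : ℝ) (ρ : Sym2 V → ℝ) : ℝ :=
  ∑ e ∈ G.edgeFinset, σ e * ρ e ^ p

variable {G} {σ : Sym2 V → ℝ} {p : ℝ} {ρ ρ' : Sym2 V → ℝ}

lemma pEnergy_nonneg (hσ : ∀ e ∈ G.edgeSet, 0 ≤ σ e) (hρ : ∀ e ∈ G.edgeSet, 0 ≤ ρ e) :
    0 ≤ G.pEnergy σ p ρ :=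
  sum_nonneg fun e he =>
    mul_nonneg (hσ e (mem_edgeFinset.mp he)) (Real.rpow_nonneg (hρ e (mem_edgeFinset.mp he)) p)

lemma pEnergy_le_pEnergy (hσ : ∀ e ∈ G.edgeSet, 0 ≤ σ e) (hp : 0 ≤ p)
    (hρ : ∀ e ∈ G.edgeSet, 0 ≤ ρ e) (hρρ' : ∀ e ∈ G.edgeSet, ρ e ≤ ρ' e) :
    G.pEnergy σ p ρ ≤ G.pEnergy σ p ρ' :=
  sum_le_sum fun e he => by
    rw [mem_edgeFinset] at he
    exact mul_le_mul_of_nonneg_left (Real.rpow_le_rpow (hρ e he) (hρρ' e he) hp) (hσ e he)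

lemma pEnergy_smul_add_smul_lt (hσ : ∀ e ∈ G.edgeSet, 0 < σ e) (hp : 1 < p)
    (hρ : ∀ e ∈ G.edgeSet, 0 ≤ ρ e) (hρ' : ∀ e ∈ G.edgeSet, 0 ≤ ρ' e)
    {e₀ : Sym2 V} (he₀ : e₀ ∈ G.edgeSet) (hne : ρ e₀ ≠ ρ' e₀)
    {a b : ℝ} (ha : 0 < a) (hb : 0 < b) (hab : a + b = 1) :
    G.pEnergy σ p (a • ρ + b • ρ') < a * G.pEnergy σ p ρ + b * G.pEnergy σ p ρ' := by
  simp only [pEnergy, mul_sum, ← sum_add_distrib]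
  have hconv := strictConvexOn_rpow hp
  refine sum_lt_sum (fun e he => ?_) ⟨e₀, mem_edgeFinset.mpr he₀, ?_⟩
  · rw [mem_edgeFinset] at he
    have := hconv.convexOn.2 (hρ e he) (hρ' e he) ha.le hb.le hab
    simp only [Pi.add_apply, Pi.smul_apply, smul_eq_mul] at this ⊢
    nlinarith [hσ e he]
  · have := hconv.2 (hρ e₀ he₀) (hρ' e₀ he₀) hne ha hb hab
    simp only [Pi.add_apply, Pi.smul_apply, smul_eq_mul] at this ⊢
    nlinarith [hσ e₀ he₀]

end Energy

section Admissible

variable {V : Type*} [DecidableEq V] (G : SimpleGraph V)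

def IsAdmissible (s t : V) (ρ : Sym2 V → ℝ) : Prop :=
  (∀ e, 0 ≤ ρ e) ∧ ∀ γ : G.Path s t, 1 ≤ ∑ e ∈ γ.1.edges.toFinset, ρ e

variable {G}

lemma isAdmissible_eDiff {s t : V} {φ : V → ℝ} (hs : φ s = 0) (ht : φ t = 1) :
    G.IsAdmissible s t (eDiff φ) := by
  refine ⟨eDiff_nonneg φ, fun γ => ?_⟩
  rw [List.sum_toFinset _ γ.2.isTrail.edges_nodup]
  simpa [hs, ht] using γ.1.abs_sub_le_sum_eDiff φ

lemma convex_setOf_isAdmissible (s t : V) : Convex ℝ {ρ | G.IsAdmissible s t ρ} := by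
  rintro ρ ⟨hρ₀, hρ⟩ ρ' ⟨hρ₀', hρ'⟩ a b ha hb hab
  refine ⟨fun e => ?_, fun γ => ?_⟩
  · simp only [Pi.add_apply, Pi.smul_apply, smul_eq_mul]
    have := hρ₀ e; have := hρ₀' e
    positivity
  · simp only [Pi.add_apply, Pi.smul_apply, smul_eq_mul, sum_add_distrib, ← mul_sum]
    nlinarith [hρ γ, hρ' γ]

variable (G) [Fintype V] [DecidableRel G.Adj]

def pModulus (σ : Sym2 V → ℝ) (p : ℝ) (s t : V) : ℝ :=
  sInf {x | ∃ ρ, G.IsAdmissible s t ρ ∧ x = G.pEnergy σ p ρ}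

variable {G} {σ : Sym2 V → ℝ} {p : ℝ} {s t : V} {ρ ρ' : Sym2 V → ℝ}

lemma pModulus_le_pEnergy (hσ : ∀ e ∈ G.edgeSet, 0 ≤ σ e)
    (hρ : G.IsAdmissible s t ρ) : G.pModulus σ p s t ≤ G.pEnergy σ p ρ := by
  refine csInf_le ⟨0, ?_⟩ ⟨ρ, hρ, rfl⟩
  rintro _ ⟨ρ', hρ', rfl⟩
  exact pEnergy_nonneg hσ fun e _ => hρ'.1 e

theorem eqOn_edgeSet_of_pEnergy_eq_pModulus (hσ : ∀ e ∈ G.edgeSet, 0 < σ e) (hp : 1 < p)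
    (hρ : G.IsAdmissible s t ρ) (hρ' : G.IsAdmissible s t ρ')
    (hE : G.pEnergy σ p ρ = G.pModulus σ p s t) (hE' : G.pEnergy σ p ρ' = G.pModulus σ p s t) :
    Set.EqOn ρ ρ' G.edgeSet := by
  intro e he
  by_contra hne
  have hmid : G.IsAdmissible s t ((1 / 2 : ℝ) • ρ + (1 / 2 : ℝ) • ρ') :=
    convex_setOf_isAdmissible s t hρ hρ' (by norm_num) (by norm_num) (by norm_num)
  have hle := pModulus_le_pEnergy (p := p) (fun e he => (hσ e he).le) hmid
  have hlt := pEnergy_smul_add_smul_lt (a := 1 / 2) (b := 1 / 2) hσ hp (fun e _ => hρ.1 e)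
    (fun e _ => hρ'.1 e) he hne (by norm_num) (by norm_num) (by norm_num)
  linarith

end Admissible

section PathDist

variable {V : Type*} [DecidableEq V] {G : SimpleGraph V} {ρ : Sym2 V → ℝ}

variable (G) in
def pathDist (ρ : Sym2 V → ℝ) (s x : V) : ℝ :=
  ⨅ γ : G.Path s x, ∑ e ∈ γ.1.edges.toFinset, ρ e

lemma le_pathDist {s x : V} {c : ℝ} (h : G.Reachable s x)
    (hc : ∀ γ : G.Path s x, c ≤ ∑ e ∈ γ.1.edges.toFinset, ρ e) : c ≤ G.pathDist ρ s x :=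
  have : Nonempty (G.Path s x) := h.elim fun w => ⟨w.toPath⟩
  le_ciInf hc

lemma Walk.sum_edges_toPath_le (hρ : ∀ e, 0 ≤ ρ e) {u v : V} (w : G.Walk u v) :
    ∑ e ∈ w.toPath.1.edges.toFinset, ρ e ≤ ∑ e ∈ w.edges.toFinset, ρ e :=
  sum_le_sum_of_subset_of_nonneg
    (fun _ he => List.mem_toFinset.2 (w.edges_toPath_subset_edges (List.mem_toFinset.1 he)))
    fun e _ _ => hρ e

variable [Fintype V] [DecidableRel G.Adj]

lemma pathDist_le {s x : V} (γ : G.Path s x) :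
    G.pathDist ρ s x ≤ ∑ e ∈ γ.1.edges.toFinset, ρ e :=
  ciInf_le (Set.finite_range _).bddBelow γ

lemma pathDist_self (s : V) : G.pathDist ρ s s = 0 :=
  le_antisymm ((pathDist_le Path.nil).trans_eq (by simp))
    (le_pathDist (Reachable.refl s) fun γ => by simp [γ.loop_eq])

lemma pathDist_le_add (hρ : ∀ e, 0 ≤ ρ e) {s x y : V} (hx : G.Reachable s x) (hxy : G.Adj x y) :
    G.pathDist ρ s y ≤ G.pathDist ρ s x + ρ s(x, y) := by
  have : Nonempty (G.Path s x) := hx.elim fun w => ⟨w.toPath⟩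
  obtain ⟨γ, hγ⟩ := exists_eq_ciInf_of_finite (f := fun γ : G.Path s x =>
    ∑ e ∈ γ.1.edges.toFinset, ρ e)
  calc G.pathDist ρ s y ≤ ∑ e ∈ (γ.1.concat hxy).edges.toFinset, ρ e :=
        (pathDist_le _).trans ((γ.1.concat hxy).sum_edges_toPath_le hρ)
    _ ≤ ∑ e ∈ γ.1.edges.toFinset, ρ e + ρ s(x, y) := by
        rw [Walk.edges_concat, List.concat_eq_append, List.toFinset_append, List.toFinset_cons,
          List.toFinset_nil, LawfulSingleton.insert_empty_eq, union_comm, ← insert_eq]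
        exact sum_insert_le_add (hρ _) _
    _ = G.pathDist ρ s x + ρ s(x, y) := by rw [hγ]; rfl

theorem exists_potential_le_of_isAdmissible (hG : G.Connected) {s t : V}
    (hρ : G.IsAdmissible s t ρ) :
    ∃ φ : V → ℝ, φ s = 0 ∧ φ t = 1 ∧ ∀ e ∈ G.edgeSet, eDiff φ e ≤ ρ e := by
  refine ⟨fun x => min (G.pathDist ρ s x) 1, by simp [pathDist_self],
    min_eq_right (le_pathDist (hG s t) hρ.2), ?_⟩
  rintro ⟨x, y⟩ (hxy : G.Adj x y)
  have hy := pathDist_le_add hρ.1 (hG s x) hxy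
  have hx := pathDist_le_add hρ.1 (hG s y) hxy.symm
  rw [Sym2.eq_swap] at hx
  calc eDiff _ s(x, y) ≤ max |G.pathDist ρ s x - G.pathDist ρ s y| |(1 : ℝ) - 1| :=
        abs_min_sub_min_le_max _ _ _ _
    _ ≤ ρ s(x, y) := max_le (abs_sub_le_iff.2 ⟨by linarith, by linarith⟩) (by simpa using hρ.1 _)

end PathDist

end SimpleGraph

theorem modulus_as_dissipated_power_general
    {V : Type*} [Fintype V] [DecidableEq V]
    (G : SimpleGraph V) [DecidableRel G.Adj] (hG : G.Connected)
    (σ : Sym2 V → ℝ) (hσ : ∀ e ∈ G.edgeSet, 0 < σ e)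
    (s t : V)
    (p : ℝ) (hp : 1 < p)
    (ρstar : Sym2 V → ℝ)
    (hadm : (∀ e, 0 ≤ ρstar e) ∧
      ∀ γ : G.Path s t, 1 ≤ ∑ e ∈ γ.1.edges.toFinset, ρstar e)
    (hopt : (∑ e ∈ G.edgeFinset, σ e * ρstar e ^ p) =
      sInf {x | ∃ ρ : Sym2 V → ℝ,
        ((∀ e, 0 ≤ ρ e) ∧ ∀ γ : G.Path s t, 1 ≤ ∑ e ∈ γ.1.edges.toFinset, ρ e) ∧
        x = ∑ e ∈ G.edgeFinset, σ e * ρ e ^ p})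
    (φstar : V → ℝ) (hφs : φstar s = 0) (hφt : φstar t = 1)
    (hφmin : ∀ φ : V → ℝ, φ s = 0 → φ t = 1 →
      (∑ e ∈ G.edgeFinset, σ e * eDiff φstar e ^ p) ≤
        ∑ e ∈ G.edgeFinset, σ e * eDiff φ e ^ p) :
    (∀ e ∈ G.edgeFinset, ρstar e = eDiff φstar e) ∧
    (∑ e ∈ G.edgeFinset, σ e * ρstar e ^ p) =
      ∑ e ∈ G.edgeFinset, σ e * eDiff φstar e ^ p := by
  open SimpleGraph in
  have hmod : G.pEnergy σ p ρstar = G.pModulus σ p s t := hopt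
  have hσ₀ : ∀ e ∈ G.edgeSet, 0 ≤ σ e := fun e he => (hσ e he).le
  have hφ : G.IsAdmissible s t (eDiff φstar) := isAdmissible_eDiff hφs hφt
  have hle : G.pEnergy σ p ρstar ≤ G.pEnergy σ p (eDiff φstar) :=
    hmod.trans_le (pModulus_le_pEnergy hσ₀ hφ)
  have hge : G.pEnergy σ p (eDiff φstar) ≤ G.pEnergy σ p ρstar := by
    obtain ⟨ψ, hψs, hψt, hψρ⟩ := exists_potential_le_of_isAdmissible hG hadm
    exact (hφmin ψ hψs hψt).trans
      (pEnergy_le_pEnergy hσ₀ (by linarith) (fun e _ => eDiff_nonneg ψ e) hψρ)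
  have hE : G.pEnergy σ p ρstar = G.pEnergy σ p (eDiff φstar) := le_antisymm hle hge
  exact ⟨fun e he => eqOn_edgeSet_of_pEnergy_eq_pModulus hσ hp hadm hφ hmod (hE ▸ hmod)
    (mem_edgeFinset.mp he), hE⟩

/-- modulus as dissipated power: for the family of simple paths from `s` to `t`
in a finite connected simple graph, the optimal density `ρ*` for `p`-modulus agrees with the
absolute potential difference of the optimal Dirichlet potential `φ*` on every edge, and the
modulus equals the minimal dissipated power. -/
theorem modulus_as_dissipated_power
    {V : Type*} [Fintype V] [DecidableEq V]
    (G : SimpleGraph V) [DecidableRel G.Adj] (hG : G.Connected)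
    (σ : Sym2 V → ℝ) (hσ : ∀ e ∈ G.edgeSet, 0 < σ e)
    (s t : V) (hst : s ≠ t)
    (p : ℝ) (hp : 1 < p)
    (ρstar : Sym2 V → ℝ)
    (hadm : (∀ e, 0 ≤ ρstar e) ∧
      ∀ γ : G.Path s t, 1 ≤ ∑ e ∈ γ.1.edges.toFinset, ρstar e)
    (hopt : (∑ e ∈ G.edgeFinset, σ e * ρstar e ^ p) =
      sInf {x | ∃ ρ : Sym2 V → ℝ,
        ((∀ e, 0 ≤ ρ e) ∧ ∀ γ : G.Path s t, 1 ≤ ∑ e ∈ γ.1.edges.toFinset, ρ e) ∧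
        x = ∑ e ∈ G.edgeFinset, σ e * ρ e ^ p})
    (φstar : V → ℝ) (hφs : φstar s = 0) (hφt : φstar t = 1)
    (hφmin : ∀ φ : V → ℝ, φ s = 0 → φ t = 1 →
      (∑ e ∈ G.edgeFinset, σ e * eDiff φstar e ^ p) ≤
        ∑ e ∈ G.edgeFinset, σ e * eDiff φ e ^ p) :
    (∀ e ∈ G.edgeFinset, ρstar e = eDiff φstar e) ∧
    (∑ e ∈ G.edgeFinset, σ e * ρstar e ^ p) =
      ∑ e ∈ G.edgeFinset, σ e * eDiff φstar e ^ p :=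
  modulus_as_dissipated_power_general G hG σ hσ s t p hp ρstar hadm hopt φstar hφs hφt hφmin
end
end
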